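/- Let T be a tree on a finite vertex type, let β and γ be real numbers, let H(T) = β·D(T) + γ·A(T), and let e = uv be an edge of T. Then det(x·I − H(T)) = det(x·I − H(T − e)) − β·det(x·I − H_v(T − e)) − β·det(x·I − H_u(T − e)) + (β² − γ²)·det(x·I − H_{uv}(T)), where H(T − e) = β·D(T − e) + γ·A(T − e). -/

import Mathlib

open Polynomial Matrix

attribute [local instance] Classical.propDecidable

noncomputable section

/-- The permanent of a square matrix: `per M = ∑_{σ} ∏_i M i (σ i)`. -/
def Matrix.per {n R : Type*} [Fintype n] [DecidableEq n] [CommRing R]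
    (M : Matrix n n R) : R :=
  ∑ σ : Equiv.Perm n, ∏ i, M i (σ i)

/-- The characteristic polynomial `φ(M) = det (x·I - M)`. -/
def phi {n R : Type*} [Fintype n] [DecidableEq n] [CommRing R]
    (M : Matrix n n (Polynomial R)) : Polynomial R :=
  ((Polynomial.X : Polynomial R) • (1 : Matrix n n (Polynomial R)) - M).det

/-- The permanental polynomial `ψ(M) = per (x·I - M)`. -/
def psi {n R : Type*} [Fintype n] [DecidableEq n] [CommRing R]
    (M : Matrix n n (Polynomial R)) : Polynomial R :=
  ((Polynomial.X : Polynomial R) • (1 : Matrix n n (Polynomial R)) - M).per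

variable {V : Type*}

/-- The principal submatrix of `M` obtained by deleting the rows and columns indexed by `S`. -/
def delSub {R : Type*} (M : Matrix V V R) (S : Set V) :
    Matrix {w : V // w ∉ S} {w : V // w ∉ S} R :=
  M.submatrix Subtype.val Subtype.val

/-- `C` is a cycle of `G`: a subgraph of `G` that is connected, has nonempty vertex set,
and in which every vertex of `C` has degree exactly `2` in `C`. -/
def IsCycleSub (G : SimpleGraph V) (C : G.Subgraph) : Prop :=
  C.Connected ∧ C.verts.Nonempty ∧ ∀ w ∈ C.verts, (C.neighborSet w).ncard = 2

variable [Fintype V] [DecidableEq V]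

/-- The degree diagonal matrix `D(G)` of a graph. -/
def degMat (R : Type*) [CommRing R] (G : SimpleGraph V) [DecidableRel G.Adj] :
    Matrix V V R :=
  Matrix.diagonal fun w => (G.degree w : R)

/-- The linear combination matrix `H(G) = β·D(G) + γ·A(G)` over `ℝ[x]`. -/
def hMat (β γ : ℝ) (G : SimpleGraph V) [DecidableRel G.Adj] :
    Matrix V V (Polynomial ℝ) :=
  Polynomial.C β • degMat (Polynomial ℝ) G + Polynomial.C γ • G.adjMatrix (Polynomial ℝ)

/-! Deleting `e = uv` changes `H` only on the `{u, v}` block, by `[[β, γ], [γ, β]]`. Expanding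
`det (x·I - H(T))` multilinearly in the rows `u` and `v` produces the four terms of the recursion
together with the cofactors `adj(u, v)` and `adj(v, u)` of `x·I - H(T - e)`. Those vanish because
`e` is a bridge of the tree: `x·I - H(T - e)` is block diagonal along the components of `T - e`,
and `u`, `v` lie in different components. -/

section LinearAlgebra

variable {n R : Type*} [Fintype n] [DecidableEq n] [CommRing R]

theorem det_eq_det_delSub_of_rows_eq_single (M : Matrix n n R) (S : Set n)
    [DecidablePred (· ∈ S)] (hM : ∀ i ∈ S, M i = Pi.single i 1) :
    M.det = (delSub M S).det := by
  rw [twoBlockTriangular_det' M (· ∈ S) fun i hi j hj => by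
    rw [hM i hi, Pi.single_eq_of_ne (ne_of_mem_of_not_mem hi hj).symm]]
  have hS : toSquareBlockProp M (· ∈ S) = 1 := by
    ext ⟨i, hi⟩ ⟨j, hj⟩
    rw [toSquareBlockProp_def, of_apply, hM i hi, Pi.single_apply, one_apply]
    simp only [Subtype.mk.injEq, eq_comm]
  rw [hS, det_one, one_mul]
  rfl

theorem adjugate_apply_self_eq_det_delSub (A : Matrix n n R) (i : n) :
    A.adjugate i i = (delSub A {i}).det := by
  rw [adjugate_apply, det_eq_det_delSub_of_rows_eq_single _ {i} fun j hj => by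
    rw [Set.mem_singleton_iff.mp hj, updateRow_self]]
  have hdel : delSub (A.updateRow i (Pi.single i 1)) {i} = delSub A {i} := by
    ext ⟨j, hj⟩ k
    simp only [delSub, submatrix_apply, updateRow_ne (show j ≠ i from hj)]
  rw [hdel]

theorem adjugate_apply_eq_zero_of_blockTriangular (A : Matrix n n R) (p : n → Prop)
    [DecidablePred p] (hA : ∀ r c, p r → ¬p c → A r c = 0) {i j : n} (hi : p i)
    (hj : ¬p j) : A.adjugate i j = 0 := by
  rw [adjugate_apply, twoBlockTriangular_det' _ p fun r hr c hc => by
    rw [updateRow_ne (by rintro rfl; exact hj hr), hA r c hr hc]]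
  refine mul_eq_zero_of_right _ (det_eq_zero_of_row_eq_zero ⟨j, hj⟩ fun c => ?_)
  rw [toSquareBlockProp_def, of_apply, updateRow_self,
    Pi.single_eq_of_ne (by rintro hci; exact c.2 (hci ▸ hi))]

variable {u v : n}

theorem det_updateRow_single_pair (A : Matrix n n R) (huv : u ≠ v) :
    ((A.updateRow u (Pi.single u 1)).updateRow v (Pi.single v 1)).det =
      (delSub A {u, v}).det := by
  rw [det_eq_det_delSub_of_rows_eq_single _ {u, v} ?_]
  · have hdel : delSub ((A.updateRow u (Pi.single u 1)).updateRow v (Pi.single v 1)) {u, v} =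
        delSub A {u, v} := by
      ext ⟨j, hj⟩ k
      simp only [Set.mem_insert_iff, Set.mem_singleton_iff, not_or] at hj
      simp only [delSub, submatrix_apply, updateRow_ne hj.1, updateRow_ne hj.2]
    rw [hdel]
  · rintro i (rfl | rfl)
    · rw [updateRow_ne huv, updateRow_self]
    · rw [updateRow_self]

theorem det_updateRow_single_swap (A : Matrix n n R) (huv : u ≠ v) :
    ((A.updateRow u (Pi.single v 1)).updateRow v (Pi.single u 1)).det =
      -((A.updateRow u (Pi.single u 1)).updateRow v (Pi.single v 1)).det := by
  have hswap : ((A.updateRow u (Pi.single v 1)).updateRow v (Pi.single u 1)).submatrix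
      (Equiv.swap u v) id = (A.updateRow u (Pi.single u 1)).updateRow v (Pi.single v 1) := by
    ext i j
    rcases eq_or_ne i u with rfl | hiu
    · simp [updateRow_ne huv]
    rcases eq_or_ne i v with rfl | hiv
    · simp [updateRow_ne huv]
    · simp [Equiv.swap_apply_of_ne_of_ne hiu hiv, updateRow_ne hiu, updateRow_ne hiv]
  rw [← hswap, det_permute, Equiv.Perm.sign_swap huv]
  simp

theorem det_updateRow_updateRow_same (A : Matrix n n R) (huv : u ≠ v) (w : n → R) :
    ((A.updateRow v w).updateRow u w).det = 0 :=
  det_zero_of_row_eq huv (by rw [updateRow_self, updateRow_ne huv.symm, updateRow_self])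

theorem det_updateRow_sub_smul_sub_smul (M : Matrix n n R) {i : n} {r : n → R} (hr : M i = r)
    (a b : R) (s t : n → R) :
    (M.updateRow i (r - a • s - b • t)).det =
      M.det - a * (M.updateRow i s).det - b * (M.updateRow i t).det := by
  simp only [sub_eq_add_neg, ← neg_smul, det_updateRow_add, det_updateRow_smul, ← hr,
    updateRow_eq_self]
  ring

theorem det_sub_symmetric_pair (A : Matrix n n R) (huv : u ≠ v) (a b : R) :
    (A - a • (Matrix.single u u 1 + Matrix.single v v 1)
        - b • (Matrix.single u v 1 + Matrix.single v u 1)).det =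
      A.det - a * (A.adjugate u u + A.adjugate v v) - b * (A.adjugate u v + A.adjugate v u)
        + (a ^ 2 - b ^ 2) * (delSub A {u, v}).det := by
  set eu : n → R := Pi.single u 1
  set ev : n → R := Pi.single v 1
  have hrows : A - a • (Matrix.single u u 1 + Matrix.single v v 1)
      - b • (Matrix.single u v 1 + Matrix.single v u 1) =
      (A.updateRow u (A u - a • eu - b • ev)).updateRow v (A v - a • ev - b • eu) := by
    ext i j
    simp only [Matrix.sub_apply, Matrix.add_apply, Matrix.smul_apply, Matrix.single_apply,
      updateRow_apply, Pi.sub_apply, Pi.smul_apply, Pi.single_apply, smul_eq_mul, eu, ev]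
    split_ifs <;> grind
  have hexpand_u : ∀ w : n → R,
      ((A.updateRow v w).updateRow u (A u - a • eu - b • ev)).det =
        (A.updateRow v w).det - a * ((A.updateRow v w).updateRow u eu).det
          - b * ((A.updateRow v w).updateRow u ev).det :=
    fun w => det_updateRow_sub_smul_sub_smul _ (updateRow_ne huv) _ _ _ _
  -- expand in row `v`, then in row `u`; of the nine determinants two have equal rows
  rw [hrows, det_updateRow_sub_smul_sub_smul _ (updateRow_ne huv.symm),
    det_updateRow_sub_smul_sub_smul _ rfl, updateRow_comm _ huv, updateRow_comm _ huv,
    hexpand_u, hexpand_u, det_updateRow_updateRow_same _ huv,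
    det_updateRow_updateRow_same _ huv, updateRow_comm _ huv.symm, updateRow_comm _ huv.symm,
    det_updateRow_single_swap _ huv, det_updateRow_single_pair _ huv]
  simp only [adjugate_apply]
  ring

end LinearAlgebra

theorem delSub_smul_one_sub {n R : Type*} [DecidableEq n] [CommRing R] (c : R)
    (M : Matrix n n R) (S : Set n) :
    delSub (c • (1 : Matrix n n R) - M) S = c • 1 - delSub M S := by
  ext ⟨i, _⟩ ⟨j, _⟩
  simp [delSub, one_apply]

theorem phi_delSub (M : Matrix V V ℝ[X]) (S : Set V) [DecidablePred (· ∈ S)] :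
    phi (delSub M S) = (delSub ((X : ℝ[X]) • 1 - M) S).det := by
  rw [phi, delSub_smul_one_sub]

namespace SimpleGraph

theorem adjugate_apply_eq_zero_of_not_reachable {W R : Type*} [Fintype W] [DecidableEq W]
    [CommRing R] (G : SimpleGraph W) (A : Matrix W W R)
    (hA : ∀ r c, r ≠ c → ¬G.Adj r c → A r c = 0) {i j : W} (h : ¬G.Reachable i j) :
    A.adjugate i j = 0 :=
  adjugate_apply_eq_zero_of_blockTriangular A (G.Reachable i)
    (fun r c hr hc => hA r c (fun hrc => hc (hrc ▸ hr)) fun hadj => hc (hr.trans hadj.reachable))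
    (.refl i) h

theorem adjMatrix_eq_adjMatrix_deleteEdges_add {W R : Type*} [DecidableEq W] [CommRing R]
    (G : SimpleGraph W) [DecidableRel G.Adj] {u v : W} (h : G.Adj u v) :
    G.adjMatrix R = (G.deleteEdges {s(u, v)}).adjMatrix R
      + (Matrix.single u v 1 + Matrix.single v u 1) := by
  ext i j
  simp only [Matrix.add_apply, adjMatrix_apply, deleteEdges_adj, Matrix.single_apply,
    Set.mem_singleton_iff, Sym2.eq_iff]
  split_ifs <;> grind [h.symm, h.ne]

theorem degree_cast_eq_sum_adjMatrix {W R : Type*} [Fintype W] [CommRing R]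
    (G : SimpleGraph W) [DecidableRel G.Adj] (i : W) :
    (G.degree i : R) = ∑ j, G.adjMatrix R i j := by
  simpa [mulVec, dotProduct] using (adjMatrix_mulVec_const_apply (G := G) (a := (1 : R))).symm

theorem degMat_eq_degMat_deleteEdges_add {R : Type*} [CommRing R] (G : SimpleGraph V)
    [DecidableRel G.Adj] {u v : V} (h : G.Adj u v) :
    degMat R G =
      degMat R (G.deleteEdges {s(u, v)}) + (Matrix.single u u 1 + Matrix.single v v 1) := by
  ext i j
  rcases eq_or_ne i j with rfl | hij
  · simp only [degMat, diagonal_apply_eq, Matrix.add_apply]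
    rw [degree_cast_eq_sum_adjMatrix G, adjMatrix_eq_adjMatrix_deleteEdges_add G h,
      degree_cast_eq_sum_adjMatrix]
    simp [Finset.sum_add_distrib, Matrix.single_apply, ite_and]
  · simp only [degMat, diagonal_apply_ne _ hij, Matrix.add_apply, Matrix.single_apply, zero_add]
    grind

end SimpleGraph

section hMat

variable (β γ : ℝ) {G : SimpleGraph V} [DecidableRel G.Adj] {u v : V}

theorem hMat_apply_of_ne_of_not_adj {i j : V} (hij : i ≠ j) (hadj : ¬G.Adj i j) :
    hMat β γ G i j = 0 := by
  simp [hMat, degMat, hij, hadj]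

theorem hMat_eq_hMat_deleteEdges_add (h : G.Adj u v) :
    hMat β γ G = hMat β γ (G.deleteEdges {s(u, v)})
      + C β • (Matrix.single u u 1 + Matrix.single v v 1)
      + C γ • (Matrix.single u v 1 + Matrix.single v u 1) := by
  rw [hMat, hMat, G.degMat_eq_degMat_deleteEdges_add h, G.adjMatrix_eq_adjMatrix_deleteEdges_add h]
  module

theorem delSub_hMat_deleteEdges (h : G.Adj u v) :
    delSub (hMat β γ (G.deleteEdges {s(u, v)})) {u, v} = delSub (hMat β γ G) {u, v} := by
  rw [hMat_eq_hMat_deleteEdges_add β γ h]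
  ext ⟨i, hi⟩ ⟨j, _⟩
  simp only [Set.mem_insert_iff, Set.mem_singleton_iff, not_or] at hi
  simp [delSub, Ne.symm hi.1, Ne.symm hi.2]

end hMat

theorem tree_det_edge_recursion
    {V : Type*} [Fintype V] [DecidableEq V]
    (T : SimpleGraph V) [DecidableRel T.Adj] (hT : T.IsTree) (β γ : ℝ)
    (u v : V) (he : T.Adj u v) :
    phi (hMat β γ T) =
      phi (hMat β γ (T.deleteEdges {s(u, v)}))
        - Polynomial.C β * phi (delSub (hMat β γ (T.deleteEdges {s(u, v)})) {v})
        - Polynomial.C β * phi (delSub (hMat β γ (T.deleteEdges {s(u, v)})) {u})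
        + Polynomial.C (β ^ 2 - γ ^ 2) * phi (delSub (hMat β γ T) {u, v}) := by
  set F := T.deleteEdges {s(u, v)}
  have hsep : ¬F.Reachable u v :=
    SimpleGraph.isBridge_iff.mp (SimpleGraph.isAcyclic_iff_forall_adj_isBridge.mp hT.isAcyclic he)
  have hA : ∀ r c, r ≠ c → ¬F.Adj r c → ((X : ℝ[X]) • 1 - hMat β γ F) r c = 0 :=
    fun r c hrc hadj => by simp [one_apply_ne hrc, hMat_apply_of_ne_of_not_adj β γ hrc hadj]
  have hT_eq : (X : ℝ[X]) • 1 - hMat β γ T = ((X : ℝ[X]) • 1 - hMat β γ F)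
      - C β • (Matrix.single u u 1 + Matrix.single v v 1)
      - C γ • (Matrix.single u v 1 + Matrix.single v u 1) := by
    rw [hMat_eq_hMat_deleteEdges_add β γ he]
    abel
  rw [← delSub_hMat_deleteEdges β γ he, phi_delSub, phi_delSub, phi_delSub, phi, phi, hT_eq,
    det_sub_symmetric_pair _ he.ne, F.adjugate_apply_eq_zero_of_not_reachable _ hA hsep,
    F.adjugate_apply_eq_zero_of_not_reachable _ hA fun h => hsep h.symm,
    adjugate_apply_self_eq_det_delSub, adjugate_apply_self_eq_det_delSub, map_sub, map_pow, map_pow]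
  ring
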